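/- In the graph associated to a labeled wedge, every vertex on a closed path of length n has width at most 2n. -/

import Mathlib

/-- A labeled wedge: each pair `(i, j)` with `1 ≤ i < j` is labeled separated (`true`)
or non-separated (`false`). -/
abbrev WedgeLabeling := ℕ → ℕ → Bool

/-- A vertex of the wedge `Σ = {(i,j) : 1 ≤ i < j}`. -/
def ValidVertex (p : ℕ × ℕ) : Prop := 1 ≤ p.1 ∧ p.1 < p.2

/-- The edge relation of the graph associated to a labeled wedge: a non-separated vertex
`(i,j)` has a single (upward) edge to `(i+1, j+1)`; a separated vertex `(i,j)` has a
forward edge to `(1, j+1)` and a backward edge to `(1, i+1)`. -/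
def WedgeStep (W : WedgeLabeling) (p q : ℕ × ℕ) : Prop :=
  (W p.1 p.2 = false ∧ q = (p.1 + 1, p.2 + 1)) ∨
    (W p.1 p.2 = true ∧ (q = (1, p.2 + 1) ∨ q = (1, p.1 + 1)))

/-- `c 0, c 1, …, c n = c 0` is a closed path of length `n` in the graph associated to the
labeled wedge `W`. -/
def IsClosedWedgePath (W : WedgeLabeling) (n : ℕ) (c : ℕ → ℕ × ℕ) : Prop :=
  0 < n ∧ (∀ i ≤ n, ValidVertex (c i)) ∧ (∀ i < n, WedgeStep W (c i) (c (i + 1))) ∧ c n = c 0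

/-!
Every step of the wedge graph raises the first coordinate by at most one, and either raises
the width by exactly one or is a backward step `(i, j) → (1, i + 1)`. A closed path cannot
raise its width at every step, so it takes a backward step `c t → c (t + 1)`. Going around the
cycle from `c (t + 1) = (1, _)` to `c t` takes `n - 1` steps, so `(c t).1 ≤ n` and `c (t + 1)`
has width at most `n + 1`. Every vertex of the cycle is reached from `c (t + 1)` in at most
`n - 1` steps, each adding at most one to the width.
-/

theorem apply_le_apply_add_sub_of_step_le {f : ℕ → ℕ} {a b : ℕ} (hab : a ≤ b)
    (hf : ∀ k, a ≤ k → k < b → f (k + 1) ≤ f k + 1) : f b ≤ f a + (b - a) := by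
  induction b, hab using Nat.le_induction with
  | base => simp
  | succ b hab ih =>
    have hstep := hf b hab (Nat.lt_add_one b)
    have hprev := ih fun k hak hkb => hf k hak (Nat.lt_add_right 1 hkb)
    omega

namespace WedgeStep

variable {W : WedgeLabeling} {p q : ℕ × ℕ}

theorem fst_le (h : WedgeStep W p q) : q.1 ≤ p.1 + 1 := by
  rcases h with ⟨-, rfl⟩ | ⟨-, rfl | rfl⟩ <;> simp

theorem snd_eq_or_eq_backward (h : WedgeStep W p q) : q.2 = p.2 + 1 ∨ q = (1, p.1 + 1) := by
  rcases h with ⟨-, rfl⟩ | ⟨-, rfl | rfl⟩ <;> simp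

theorem snd_le (hp : ValidVertex p) (h : WedgeStep W p q) : q.2 ≤ p.2 + 1 := by
  rcases h.snd_eq_or_eq_backward with h | rfl
  · exact h.le
  · exact Nat.add_le_add_right hp.2.le 1

end WedgeStep

namespace IsClosedWedgePath

variable {W : WedgeLabeling} {n : ℕ} {c : ℕ → ℕ × ℕ}

theorem fst_le_add (hc : IsClosedWedgePath W n c) {a b : ℕ} (hab : a ≤ b) (hbn : b ≤ n) :
    (c b).1 ≤ (c a).1 + (b - a) :=
  apply_le_apply_add_sub_of_step_le (f := fun k => (c k).1) hab fun k _ hkb =>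
    (hc.2.2.1 k (by omega)).fst_le

theorem snd_le_add (hc : IsClosedWedgePath W n c) {a b : ℕ} (hab : a ≤ b) (hbn : b ≤ n) :
    (c b).2 ≤ (c a).2 + (b - a) :=
  apply_le_apply_add_sub_of_step_le (f := fun k => (c k).2) hab fun k _ hkb =>
    (hc.2.2.1 k (by omega)).snd_le (hc.2.1 k (by omega))

theorem exists_backward_step (hc : IsClosedWedgePath W n c) :
    ∃ t < n, c (t + 1) = (1, (c t).1 + 1) := by
  obtain ⟨hn, -, hstep, hclosed⟩ := hc
  by_contra! hforward
  have hmono : StrictMonoOn (fun k => (c k).2) (Set.Iic n) :=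
    strictMonoOn_Iic_of_lt_succ fun k hk => by
      rw [Order.succ_eq_add_one]
      have := (hstep k hk).snd_eq_or_eq_backward.resolve_right (hforward k hk)
      omega
  have := hmono (Set.mem_Iic.2 n.zero_le) Set.self_mem_Iic hn
  simp [hclosed] at this

end IsClosedWedgePath

/-- In the graph associated to a labeled wedge, every vertex on a closed path of
length `n` has width at most `2n`. -/
theorem stmt_10 (W : WedgeLabeling) (n : ℕ) (c : ℕ → ℕ × ℕ)
    (hc : IsClosedWedgePath W n c) : ∀ i ≤ n, (c i).2 ≤ 2 * n := by
  obtain ⟨t, htn, hback⟩ := hc.exists_backward_step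
  have hclosed : c n = c 0 := hc.2.2.2
  have hfst : (c (t + 1)).1 = 1 := by rw [hback]
  have hsnd : (c (t + 1)).2 = (c t).1 + 1 := by rw [hback]
  have hfst_t : (c t).1 ≤ n := by
    have h₁ := hc.fst_le_add (Nat.zero_le t) htn.le
    have h₂ := hc.fst_le_add (a := t + 1) htn le_rfl
    rw [hclosed, hfst] at h₂
    omega
  intro i hin
  rcases le_or_gt i t with hit | hti
  · have h₁ := hc.snd_le_add (Nat.zero_le i) hin
    have h₂ := hc.snd_le_add (a := t + 1) htn le_rfl
    rw [hclosed] at h₂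
    omega
  · have := hc.snd_le_add (a := t + 1) hti hin
    omega
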